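/- arXiv:2006.02727 — 8 statements merged into one kernel-verified Lean document; each statement's English description precedes it below -/
import Mathlib

section
/- Let G be a group, N ≤ K ≤ G subgroups with N normal in G. If S invariably generates K and T invariably generates G/N, and T₁ ⊆ G is any set of preimages of T under the quotient map G → G/N, then S ∪ T₁ invariably generates G. -/
/-- `S` invariably generates `G`. -/
def InvGen (G : Type*) [Group G] (S : Set G) : Prop :=
  ∀ f : G → G, Subgroup.closure ((fun s => f s * s * (f s)⁻¹) '' S) = ⊤

/-!
Let `H` be the subgroup generated by the conjugates `f x * x * (f x)⁻¹`. Its image in `G ⧸ N`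
contains conjugates of a lift of every element of `T`, so `H` maps onto `G ⧸ N`, i.e.
`H ⊔ N = G`. Writing each `f s = h * k` with `h ∈ H`, `k ∈ N ≤ K`, the conjugates `k * s * k⁻¹`
(`s ∈ S`) lie in `H` and invariably generate `K`; hence `K ≤ H`, and so `H ⊇ H ⊔ N = G`.
-/

open Subgroup

section

variable {G : Type*} [Group G]

theorem InvGen.map_eq_top {Q : Type*} [Group Q] {φ : G →* Q} {T : Set G}
    (hT : InvGen Q (φ '' T)) {H : Subgroup G} (f : G → G)
    (hf : ∀ x ∈ T, f x * x * (f x)⁻¹ ∈ H) : H.map φ = ⊤ := by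
  let lift : Q → G := Function.invFunOn φ T
  rw [eq_top_iff, ← hT (fun q => φ (f (lift q))), closure_le]
  rintro _ ⟨q, hq, rfl⟩
  have hlift : lift q ∈ T := Function.invFunOn_mem hq
  refine ⟨_, hf _ hlift, ?_⟩
  simp only [map_mul, map_inv, Function.invFunOn_eq hq, lift]

theorem InvGen.le_of_conj_mem {K H : Subgroup G} {S : Set K} (hS : InvGen K S) (f : G → G)
    (hHK : ∀ g : G, ∃ h ∈ H, ∃ k ∈ K, h * k = g)
    (hf : ∀ s ∈ S, f s * s * (f s)⁻¹ ∈ H) : K ≤ H := by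
  choose h hH k hK hhk using hHK
  let f' : K → K := fun x => ⟨k (f x), hK _⟩
  have hconj : closure ((fun s => f' s * s * (f' s)⁻¹) '' S) ≤ H.comap K.subtype := by
    rw [closure_le]
    rintro _ ⟨s, hs, rfl⟩
    have hk : (f' s : G) = (h (f s))⁻¹ * f s := eq_inv_mul_of_mul_eq (hhk _)
    have hfs : ((f' s * s * (f' s)⁻¹ : K) : G) = (h (f s))⁻¹ * (f s * s * (f s)⁻¹) * h (f s) := by
      simp only [coe_mul, coe_inv, hk]
      group
    rw [SetLike.mem_coe, mem_comap, K.subtype_apply, hfs]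
    exact H.mul_mem (H.mul_mem (H.inv_mem (hH _)) (hf s hs)) (hH _)
  rw [hS f'] at hconj
  exact fun x hx => hconj (mem_top ⟨x, hx⟩)

end

theorem invGen_of_subgroup_and_quotient {G : Type*} [Group G]
    (N K : Subgroup G) [N.Normal] (hNK : N ≤ K)
    (S : Set K) (hS : InvGen K S)
    (T : Set (G ⧸ N)) (hT : InvGen (G ⧸ N) T)
    (T₁ : Set G) (hT₁ : (QuotientGroup.mk : G → G ⧸ N) '' T₁ = T) :
    InvGen G ((Subtype.val '' S) ∪ T₁) := by
  intro f
  set H := closure ((fun x => f x * x * (f x)⁻¹) '' ((Subtype.val '' S) ∪ T₁))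
  have hH : ∀ x ∈ (Subtype.val '' S) ∪ T₁, f x * x * (f x)⁻¹ ∈ H :=
    fun x hx => subset_closure (Set.mem_image_of_mem _ hx)
  have hHN : H ⊔ N = ⊤ := by
    have hmap : H.map (QuotientGroup.mk' N) = ⊤ :=
      InvGen.map_eq_top (hT₁ ▸ hT) f fun x hx => hH x (Or.inr hx)
    rw [← QuotientGroup.ker_mk' N, ← comap_map_eq, hmap, comap_top]
  have hKH : K ≤ H := by
    refine hS.le_of_conj_mem f (fun g => ?_) fun s hs => hH s (Or.inl ⟨s, hs, rfl⟩)
    obtain ⟨h, hh, n, hn, rfl⟩ := mem_sup_of_normal_right.mp (hHN ▸ mem_top g)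
    exact ⟨h, hh, n, hNK hn, rfl⟩
  exact eq_top_iff.mpr (hHN ▸ sup_le le_rfl (hNK.trans hKH))
end

section
/- If N ⊴ G with G/N finite and N is invariably generated (IG), then G is invariably generated. -/
open Subgroup

/-- Jordan's lemma: a subgroup of a finite group meeting every conjugacy class is the
whole group. -/
lemma jordan_aux {Q : Type*} [Group Q] [Finite Q] (H : Subgroup Q)
    (h : ∀ q : Q, ∃ g : Q, g * q * g⁻¹ ∈ H) : H = ⊤ := by
  classical
  cases nonempty_fintype Q
  by_contra hne
  -- the union of the conjugates of `H`, indexed by cosets, with `1` removed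
  set F : Q ⧸ H → Finset Q :=
    fun c => (H.carrier.toFinset.image (fun x => c.out * x * c.out⁻¹)).erase 1 with hF
  have hcardF : ∀ c, (F c).card ≤ Nat.card H - 1 := by
    intro c
    have h1 : (1 : Q) ∈ H.carrier.toFinset.image (fun x => c.out * x * c.out⁻¹) := by
      refine Finset.mem_image.2 ⟨1, ?_, by group⟩
      simpa [Set.mem_toFinset] using H.one_mem
    have := Finset.card_erase_of_mem h1
    rw [hF]
    rw [this]
    have himg : (H.carrier.toFinset.image (fun x => c.out * x * c.out⁻¹)).card
        ≤ Nat.card H := by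
      refine le_trans (Finset.card_image_le) ?_
      rw [Set.toFinset_card, Fintype.card_eq_nat_card]
      rfl
    omega
  set U : Finset Q := insert 1 (Finset.univ.biUnion F) with hU
  set m := Nat.card (Q ⧸ H) with hm
  set k := Nat.card H with hk
  have hk1 : 1 ≤ k := Nat.card_pos
  have hm2 : 2 ≤ m := by
    have h0 : 0 < m := Nat.card_pos
    have h1 : H.index ≠ 1 := fun hc => hne (Subgroup.index_eq_one.mp hc)
    have : H.index = m := rfl
    omega
  have hQcard : Nat.card Q = m * k := Subgroup.card_eq_card_quotient_mul_card_subgroup H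
  have hUcard : U.card < Nat.card Q := by
    have h1 : (Finset.univ.biUnion F).card ≤ m * (k - 1) := by
      refine le_trans (Finset.card_biUnion_le) ?_
      calc ∑ c : Q ⧸ H, (F c).card ≤ ∑ _c : Q ⧸ H, (k - 1) :=
            Finset.sum_le_sum (fun c _ => hcardF c)
        _ = Fintype.card (Q ⧸ H) * (k - 1) := by simp [mul_comm]
        _ = m * (k - 1) := by rw [Fintype.card_eq_nat_card]
    have h2 : U.card ≤ m * (k - 1) + 1 := le_trans (Finset.card_insert_le _ _) (by omega)
    have h3 : m * (k - 1) + m = m * k := by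
      rw [← Nat.mul_succ, Nat.succ_eq_add_one, Nat.sub_add_cancel hk1]
    calc U.card ≤ m * (k - 1) + 1 := h2
      _ < m * (k - 1) + m := Nat.add_lt_add_left (by omega) _
      _ = m * k := h3
      _ = Nat.card Q := hQcard.symm
  obtain ⟨q, hq⟩ : ∃ q : Q, q ∉ U := by
    by_contra hc
    push_neg at hc
    have hsub : (Finset.univ : Finset Q) ⊆ U := fun x _ => hc x
    have := Finset.card_le_card hsub
    rw [Finset.card_univ, Fintype.card_eq_nat_card] at this
    omega
  obtain ⟨g, hg⟩ := h q
  -- then q ∈ F ⟦g⁻¹⟧, contradiction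
  apply hq
  rw [hU]
  have hq1 : q ≠ 1 := by
    rintro rfl
    exact hq (Finset.mem_insert_self _ _)
  refine Finset.mem_insert_of_mem (Finset.mem_biUnion.2 ⟨QuotientGroup.mk g⁻¹, Finset.mem_univ _, ?_⟩)
  rw [hF]
  refine Finset.mem_erase.2 ⟨hq1, Finset.mem_image.2 ?_⟩
  set c : Q ⧸ H := QuotientGroup.mk g⁻¹ with hc
  have hout : QuotientGroup.mk (s := H) c.out = QuotientGroup.mk g⁻¹ := by
    rw [hc, QuotientGroup.out_eq']
  have hmem : g * c.out ∈ H := by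
    rw [QuotientGroup.eq] at hout
    simpa using H.inv_mem hout
  refine ⟨(g * c.out)⁻¹ * (g * q * g⁻¹) * (g * c.out), ?_, ?_⟩
  · simp only [Set.mem_toFinset]
    exact H.mul_mem (H.mul_mem (H.inv_mem hmem) hg) hmem
  · group

/-- `G` is invariably generated. -/
def IG (G : Type*) [Group G] : Prop := ∃ S : Set G, InvGen G S

theorem ig_of_finiteIndex_normal_ig {G : Type*} [Group G]
    (N : Subgroup G) [N.Normal] (hfin : Finite (G ⧸ N)) (hN : IG N) : IG G := by
  classical
  obtain ⟨S₀, hS₀⟩ := hN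
  set S : Set G := ((↑) : N → G) '' S₀ with hSdef
  set T : Set G := Set.range (Quotient.out : G ⧸ N → G) with hTdef
  refine ⟨S ∪ T, fun f => ?_⟩
  set H : Subgroup G := Subgroup.closure ((fun s => f s * s * (f s)⁻¹) '' (S ∪ T)) with hH
  let π : G →* G ⧸ N := QuotientGroup.mk' N
  -- Step 1: H surjects onto G ⧸ N
  have hmap : H.map π = ⊤ := by
    apply jordan_aux
    intro q
    refine ⟨π (f q.out), ?_⟩
    have hout : π q.out = q := QuotientGroup.out_eq' q
    have : f q.out * q.out * (f q.out)⁻¹ ∈ H := by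
      apply Subgroup.subset_closure
      exact ⟨q.out, Or.inr ⟨q, rfl⟩, rfl⟩
    have := Subgroup.mem_map_of_mem π this
    simpa [hout] using this
  have hsurj : ∀ g : G, ∃ h : G, h ∈ H ∧ π h = π g := by
    intro g
    have : π g ∈ H.map π := by rw [hmap]; trivial
    obtain ⟨h, hh, hπ⟩ := this
    exact ⟨h, hh, hπ⟩
  -- choice of elements of H matching the images of f
  choose c hcH hcπ using fun n : N => hsurj (f (n : G))
  -- Step 2: N ≤ H
  have hNH : N ≤ H := by
    have hker : ∀ n : N, (c n)⁻¹ * f (n : G) ∈ N := by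
      intro n
      have h1 : π ((c n)⁻¹ * f (n : G)) = 1 := by
        rw [map_mul, map_inv, hcπ n, inv_mul_cancel]
      have h2 : (c n)⁻¹ * f (n : G) ∈ MonoidHom.ker π := by rwa [MonoidHom.mem_ker]
      rwa [QuotientGroup.ker_mk'] at h2
    set f' : N → N := fun n => ⟨(c n)⁻¹ * f (n : G), hker n⟩ with hf'
    have htop := hS₀ f'
    have hle : (⊤ : Subgroup N).map N.subtype ≤ H := by
      rw [← htop, MonoidHom.map_closure]
      apply Subgroup.closure_le _ |>.2
      rintro x ⟨y, ⟨s, hs, rfl⟩, rfl⟩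
      have hgen : f (s : G) * (s : G) * (f (s : G))⁻¹ ∈ H := by
        apply Subgroup.subset_closure
        exact ⟨(s : G), Or.inl ⟨s, hs, rfl⟩, rfl⟩
      have : (N.subtype (f' s * s * (f' s)⁻¹) : G)
          = (c s)⁻¹ * (f (s : G) * (s : G) * (f (s : G))⁻¹) * (c s) := by
        simp only [hf', Subgroup.coe_subtype, Subgroup.coe_mul, Subgroup.coe_inv]
        group
      rw [this]
      exact H.mul_mem (H.mul_mem (H.inv_mem (hcH s)) hgen) (hcH s)
    rwa [← Subgroup.range_subtype N, MonoidHom.range_eq_map]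
  -- Step 3: conclude
  rw [hH] at hNH hmap ⊢
  rw [eq_top_iff]
  intro g _
  obtain ⟨h, hh, hπ⟩ := hsurj g
  have : h⁻¹ * g ∈ N := by
    have h1 : π (h⁻¹ * g) = 1 := by rw [map_mul, map_inv, hπ, inv_mul_cancel]
    have h2 : h⁻¹ * g ∈ MonoidHom.ker π := by rwa [MonoidHom.mem_ker]
    rwa [QuotientGroup.ker_mk'] at h2
  have := Subgroup.mul_mem _ hh (hNH this)
  simpa using this
end

section
/- Let G be a free group freely generated by {a, b}, H = ⟨a², b⟩, and N = ⟨a², b, aba⁻¹⟩. Then {a², b, aba⁻¹} is a free generating set of N, and H ∩ aHa⁻¹ = ⟨a²⟩. -/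
open FreeGroup SemidirectProduct

private abbrev F3 := FreeGroup (Fin 3)
private abbrev P := F3 × F3
private abbrev Q := SemidirectProduct P (MulAut P) (MonoidHom.id _)

private def psi : FreeGroup Bool →* Q :=
  FreeGroup.lift (fun t => if t then ⟨(1, FreeGroup.of 0), MulEquiv.prodComm⟩
                           else ⟨(FreeGroup.of 1, FreeGroup.of 2), 1⟩)

private def lam : F3 →* P :=
  FreeGroup.lift (fun i => if i = 0 then (FreeGroup.of 0, FreeGroup.of 0)
    else if i = 1 then (FreeGroup.of 1, FreeGroup.of 2)
    else (FreeGroup.of 2, FreeGroup.of 0 * FreeGroup.of 1 * (FreeGroup.of 0)⁻¹))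

private def fh : FreeGroup (Fin 3) →* FreeGroup Bool :=
  FreeGroup.lift (fun i : Fin 3 =>
    if i = 0 then (FreeGroup.of true) ^ 2 else if i = 1 then FreeGroup.of false
    else FreeGroup.of true * FreeGroup.of false * (FreeGroup.of true)⁻¹)

private lemma fh0 : fh (FreeGroup.of 0) = (FreeGroup.of true) ^ 2 := by
  simp [fh]

private lemma fh1 : fh (FreeGroup.of 1) = FreeGroup.of false := by
  simp [fh]

private lemma fh2 : fh (FreeGroup.of 2) =
    FreeGroup.of true * FreeGroup.of false * (FreeGroup.of true)⁻¹ := by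
  simp [fh]

private lemma psiT : psi (FreeGroup.of true) = ⟨(1, FreeGroup.of 0), MulEquiv.prodComm⟩ := by
  simp [psi]

private lemma psiF : psi (FreeGroup.of false) = ⟨(FreeGroup.of 1, FreeGroup.of 2), 1⟩ := by
  simp [psi]

private lemma key : psi.comp fh = inl.comp lam := by
  apply FreeGroup.ext_hom
  intro i
  fin_cases i
  · show psi (fh (FreeGroup.of 0)) = inl (lam (FreeGroup.of 0))
    rw [fh0, sq, psi.map_mul, psiT]
    have : lam (FreeGroup.of 0) = (FreeGroup.of 0, FreeGroup.of 0) := by simp [lam]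
    rw [this]
    ext x <;> simp [mul_left, mul_right, inv_left, inv_right]
  · show psi (fh (FreeGroup.of 1)) = inl (lam (FreeGroup.of 1))
    rw [fh1, psiF]
    have : lam (FreeGroup.of 1) = (FreeGroup.of 1, FreeGroup.of 2) := by simp [lam]
    rw [this]
    ext x <;> simp [mul_left, mul_right, inv_left, inv_right]
  · show psi (fh (FreeGroup.of 2)) = inl (lam (FreeGroup.of 2))
    rw [fh2, psi.map_mul, psi.map_mul, psi.map_inv, psiT, psiF]
    have : lam (FreeGroup.of 2) = (FreeGroup.of 2,
        FreeGroup.of 0 * FreeGroup.of 1 * (FreeGroup.of 0)⁻¹) := by simp [lam]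
    rw [this]
    ext x <;> simp [mul_left, mul_right, inv_left, inv_right]

private lemma lam_fst : ∀ w, (lam w).1 = w := by
  have h : (MonoidHom.fst F3 F3).comp lam = MonoidHom.id _ := by
    apply FreeGroup.ext_hom
    intro i
    fin_cases i <;> simp [lam]
  intro w
  calc (lam w).1 = ((MonoidHom.fst F3 F3).comp lam) w := rfl
    _ = w := by rw [h]; rfl

private lemma fh_inj : Function.Injective fh := by
  intro u v h
  have h2 : (inl (lam u) : Q) = inl (lam v) := by
    have hu : psi (fh u) = (inl.comp lam) u := congrFun (congrArg DFunLike.coe key) u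
    have hv : psi (fh v) = (inl.comp lam) v := congrFun (congrArg DFunLike.coe key) v
    have := hu.symm.trans (by rw [h, hv])
    exact this
  have h3 : lam u = lam v := inl_injective h2
  rw [← lam_fst u, ← lam_fst v, h3]

private def r2 : F3 →* F3 :=
  FreeGroup.lift (fun i : Fin 3 => if i = 1 then 1 else FreeGroup.of i)

theorem free_basis_of_N_and_intersection
    (a b : FreeGroup Bool) (ha : a = FreeGroup.of true) (hb : b = FreeGroup.of false)
    (H N : Subgroup (FreeGroup Bool))
    (hH : H = Subgroup.closure {a ^ 2, b})
    (hN : N = Subgroup.closure {a ^ 2, b, a * b * a⁻¹}) :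
    (Function.Injective
        (FreeGroup.lift (fun i : Fin 3 =>
          if i = 0 then a ^ 2 else if i = 1 then b else a * b * a⁻¹)) ∧
      (FreeGroup.lift (fun i : Fin 3 =>
          if i = 0 then a ^ 2 else if i = 1 then b else a * b * a⁻¹)).range = N) ∧
    H ⊓ Subgroup.map (MulAut.conj a).toMonoidHom H = Subgroup.zpowers (a ^ 2) := by
  subst ha hb hH hN
  set A := FreeGroup.of true with hA
  set B := FreeGroup.of false with hB
  have hfh : FreeGroup.lift (fun i : Fin 3 =>
      if i = 0 then A ^ 2 else if i = 1 then B else A * B * A⁻¹) = fh := rfl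
  rw [hfh]
  have himg : (fun i : Fin 3 =>
      if i = 0 then A ^ 2 else if i = 1 then B else A * B * A⁻¹) '' {0, 1} = {A ^ 2, B} := by
    rw [Set.image_insert_eq, Set.image_singleton]
    norm_num
  have hmapH : Subgroup.map (MulAut.conj A).toMonoidHom (Subgroup.closure {A ^ 2, B})
      = Subgroup.closure {A ^ 2, A * B * A⁻¹} := by
    rw [MonoidHom.map_closure]
    congr 1
    rw [Set.image_insert_eq, Set.image_singleton]
    have e1 : (MulAut.conj A).toMonoidHom (A ^ 2) = A ^ 2 := by
      simp [MulAut.conj_apply]; group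
    have e2 : (MulAut.conj A).toMonoidHom B = A * B * A⁻¹ := by
      simp [MulAut.conj_apply]
    rw [e1, e2]
  have hHmap : Subgroup.closure {A ^ 2, B}
      = Subgroup.map fh (Subgroup.closure {FreeGroup.of 0, FreeGroup.of 1}) := by
    rw [MonoidHom.map_closure, Set.image_insert_eq, Set.image_singleton, fh0, fh1]
  have hNmap : Subgroup.closure {A ^ 2, A * B * A⁻¹}
      = Subgroup.map fh (Subgroup.closure {FreeGroup.of 0, FreeGroup.of 2}) := by
    rw [MonoidHom.map_closure, Set.image_insert_eq, Set.image_singleton, fh0, fh2]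
  refine ⟨⟨fh_inj, ?_⟩, ?_⟩
  · rw [show (fh : FreeGroup (Fin 3) →* FreeGroup Bool)
        = FreeGroup.lift (fun i : Fin 3 =>
          if i = 0 then A ^ 2 else if i = 1 then B else A * B * A⁻¹) from rfl,
      FreeGroup.range_lift_eq_closure]
    congr 1
    ext x
    simp only [Set.mem_range, Set.mem_insert_iff, Set.mem_singleton_iff]
    constructor
    · rintro ⟨i, rfl⟩
      fin_cases i <;> norm_num [Fin.ext_iff]
    · rintro (rfl | rfl | rfl)
      exacts [⟨0, by norm_num [Fin.ext_iff]⟩, ⟨1, by norm_num [Fin.ext_iff]⟩, ⟨2, by norm_num [Fin.ext_iff]⟩]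
  · apply le_antisymm
    · rintro g hg
      rw [Subgroup.mem_inf] at hg
      obtain ⟨hg1, hg2⟩ := hg
      rw [hmapH, hNmap] at hg2
      rw [hHmap] at hg1
      obtain ⟨u, hu, rfl⟩ := hg1
      obtain ⟨v, hv, hvf⟩ := hg2
      have huv : v = u := fh_inj hvf
      subst huv
      have hr2 : r2 v = v := by
        refine Subgroup.closure_induction (k := {FreeGroup.of 0, FreeGroup.of 2})
          (p := fun x _ => r2 x = x) ?_ ?_ ?_ ?_ hv
        · rintro x (rfl | rfl) <;> simp [r2]
        · simp
        · intro x y _ _ hx hy; rw [_root_.map_mul, hx, hy]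
        · intro x _ hx; rw [_root_.map_inv, hx]
      have hmem : v ∈ Subgroup.map r2 (Subgroup.closure {FreeGroup.of 0, FreeGroup.of 1}) :=
        ⟨v, hu, hr2⟩
      rw [MonoidHom.map_closure, Set.image_insert_eq, Set.image_singleton] at hmem
      have hle : Subgroup.closure {r2 (FreeGroup.of 0), r2 (FreeGroup.of 1)}
          ≤ Subgroup.zpowers (FreeGroup.of 0 : F3) := by
        rw [Subgroup.closure_le]
        rintro x (rfl | rfl)
        · simp only [r2]
          exact Subgroup.mem_zpowers _
        · simp only [r2]
          simpa using Subgroup.one_mem _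
      obtain ⟨k, hk⟩ := hle hmem
      refine ⟨k, ?_⟩
      simp only at hk
      rw [← hk, map_zpow, fh0]
    · rw [Subgroup.zpowers_le, Subgroup.mem_inf]
      constructor
      · exact Subgroup.subset_closure (Set.mem_insert _ _)
      · rw [hmapH]
        exact Subgroup.subset_closure (Set.mem_insert _ _)
end

section
/- Let G be a free group freely generated by {a, b} and H = ⟨a², b⟩. If some power aˡ (l ∈ ℤ) is conjugate in G to an element h ∈ H, then aˡ is conjugate to h by an element of H. -/
/-!
Membership in `⟨a², b⟩` is read off its Stallings graph: two vertices, `a` swapping them and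
a `b`-loop at the base point only; a reduced word lies in the subgroup iff it traces a closed
path at the base point. Write the conjugator as `aᵐ y`, where the reduced word of `y` does not
start with `a^{±1}`. Then `h = y⁻¹ aˡ y`, and for `aˡ ≠ 1` the word `y⁻¹ · aˡ · y` is reduced
as written. As `y` starts with `b^{±1}` (or is trivial), its path must start at the base point,
where it also ends; hence `y ∈ ⟨a², b⟩`, and `y` conjugates `h` to `aˡ`.
-/

open FreeGroup

namespace FreeGroup

variable {α : Type*}

lemma mk_mem_zpowers_of_forall_fst_eq {i : α} {L : List (α × Bool)}
    (h : ∀ p ∈ L, p.1 = i) : mk L ∈ Subgroup.zpowers (of i) := by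
  induction L with
  | nil => exact one_mem _
  | cons p L ih =>
    obtain ⟨j, σ⟩ := p
    obtain rfl : j = i := h _ List.mem_cons_self
    rw [← List.singleton_append, ← mul_mk]
    refine mul_mem ?_ (ih fun q hq => h q (List.mem_cons_of_mem _ hq))
    cases σ
    · show mk (invRev [(j, true)]) ∈ _
      exact inv_mk (L := [(j, true)]) ▸ inv_mem (Subgroup.mem_zpowers _)
    · exact Subgroup.mem_zpowers _

variable [DecidableEq α]

lemma toWord_mul_of_fst_ne {x y : FreeGroup α}
    (h : ∀ p ∈ x.toWord.getLast?, ∀ q ∈ y.toWord.head?, p.1 ≠ q.1) :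
    (x * y).toWord = x.toWord ++ y.toWord := by
  rw [toWord_mul]
  refine IsReduced.reduce_eq <|
    List.isChain_append.mpr ⟨isReduced_toWord, isReduced_toWord, fun p hp q hq hpq => ?_⟩
  exact absurd hpq (h p hp q hq)

lemma fst_eq_of_mem_toWord_zpow {i : α} {l : ℤ} {p : α × Bool}
    (hp : p ∈ (of i ^ l).toWord) : p.1 = i := by
  cases l with
  | ofNat n => simp_all [toWord_of_pow]
  | negSucc n => simp_all [toWord_inv, toWord_of_pow, invRev]

lemma exists_eq_zpow_mul_of_head_fst_ne (i : α) (x : FreeGroup α) :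
    ∃ m : ℤ, ∃ y : FreeGroup α, x = of i ^ m * y ∧ ∀ p ∈ y.toWord.head?, p.1 ≠ i := by
  set w := x.toWord
  obtain ⟨m, hm⟩ := Subgroup.mem_zpowers_iff.mp <|
    mk_mem_zpowers_of_forall_fst_eq (L := w.takeWhile (·.1 = i)) fun p hp => by
      simpa using List.mem_takeWhile_imp hp
  have hsuffix : w.dropWhile (·.1 = i) <:+ w := List.dropWhile_suffix _
  refine ⟨m, mk (w.dropWhile (·.1 = i)), ?_, ?_⟩
  · rw [hm, mul_mk, List.takeWhile_append_dropWhile, mk_toWord]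
  · rw [toWord_mk, (isReduced_toWord.infix hsuffix.isInfix).reduce_eq]
    intro p hp
    have hhead := List.head?_dropWhile_not (·.1 = i) w
    rw [Option.mem_def.mp hp] at hhead
    simpa using hhead

end FreeGroup

namespace ASqB

/-- The Stallings graph of `⟨a², b⟩`, where `a = of true` and `b = of false`: vertex `false` is
the base point, `a` swaps the two vertices and `b` is a loop at the base point. -/
def step : Bool → Bool × Bool → Option Bool
  | v, (true, _) => some !v
  | false, (false, _) => some false
  | true, (false, _) => none

def run (v : Bool) (w : List (Bool × Bool)) : Option Bool := w.foldlM step v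

lemma run_cons (v : Bool) (p : Bool × Bool) (w : List (Bool × Bool)) :
    run v (p :: w) = (step v p).bind (run · w) := rfl

lemma run_append (v : Bool) (u w : List (Bool × Bool)) :
    run v (u ++ w) = (run v u).bind (run · w) := List.foldlM_append

lemma step_invRev {v t : Bool} {p : Bool × Bool} (h : step v p = some t) :
    step t (p.1, !p.2) = some v := by
  obtain ⟨_ | _, _⟩ := p <;> cases v <;> simp_all [step]

lemma run_invRev {v t : Bool} {w : List (Bool × Bool)} (h : run v w = some t) :
    run t (invRev w) = some v := by
  induction w generalizing v with
  | nil => simpa [run, invRev] using h.symm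
  | cons p w ih =>
    obtain ⟨s, hs, hw⟩ := Option.bind_eq_some_iff.mp h
    rw [invRev_cons, run_append, ih hw]
    simpa [invRev, run] using step_invRev hs

lemma run_of_step {u w : List (Bool × Bool)} (huw : Red.Step u w) {v t : Bool}
    (h : run v u = some t) : run v w = some t := by
  obtain ⟨L₁, L₂, x, σ⟩ := huw
  simp only [run_append, run_cons, Option.bind_eq_some_iff] at h ⊢
  obtain ⟨s, hL₁, s₁, hs₁, s₂, hs₂, hL₂⟩ := h
  obtain rfl : s₂ = s := Option.some.inj (hs₂.symm.trans (step_invRev hs₁))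
  exact ⟨s₂, hL₁, hL₂⟩

lemma run_of_red {u w : List (Bool × Bool)} (huw : Red u w) {v t : Bool}
    (h : run v u = some t) : run v w = some t := by
  induction huw with
  | refl => exact h
  | tail _ hstep ih => exact run_of_step hstep ih

def accepted : Subgroup (FreeGroup Bool) where
  carrier := {x | run false x.toWord = some false}
  one_mem' := rfl
  mul_mem' {x y} hx hy := by
    change run false (x * y).toWord = some false
    rw [toWord_mul]
    refine run_of_red reduce.red ?_
    rw [run_append, hx]
    exact hy
  inv_mem' {x} hx := by
    change run false x⁻¹.toWord = some false
    rw [toWord_inv]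
    exact run_invRev hx

lemma mem_accepted {x : FreeGroup Bool} : x ∈ accepted ↔ run false x.toWord = some false :=
  Iff.rfl

/-- The label of a path from the base point to `v`. -/
def vertexRep (v : Bool) : FreeGroup Bool := if v then of true else 1

lemma step_mem_closure {v t : Bool} {p : Bool × Bool} (h : step v p = some t) :
    vertexRep v * mk [p] * (vertexRep t)⁻¹ ∈ Subgroup.closure {of true ^ 2, of false} := by
  have ha : of true ^ 2 ∈ Subgroup.closure {of true ^ 2, of false} :=
    Subgroup.subset_closure (by simp)
  have hb : of false ∈ Subgroup.closure {of true ^ 2, of false} :=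
    Subgroup.subset_closure (by simp)
  have hof (i : Bool) : mk [(i, true)] = of i := rfl
  have hinv (i : Bool) : mk [(i, false)] = (of i)⁻¹ := (inv_mk (L := [(i, true)])).symm
  obtain ⟨_ | _, _ | _⟩ := p <;> cases v <;>
    simp only [step, Option.some.injEq, reduceCtorEq] at h <;> subst h <;>
    simp [vertexRep, hinv, hof, ← sq, inv_pow, ha, hb]

lemma run_mem_closure {v t : Bool} {w : List (Bool × Bool)} (h : run v w = some t) :
    vertexRep v * mk w * (vertexRep t)⁻¹ ∈ Subgroup.closure {of true ^ 2, of false} := by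
  induction w generalizing v with
  | nil =>
    obtain rfl : v = t := Option.some.inj h
    simp [← one_eq_mk]
  | cons p w ih =>
    obtain ⟨s, hs, hw⟩ := Option.bind_eq_some_iff.mp h
    have hsplit : vertexRep v * mk (p :: w) * (vertexRep t)⁻¹
        = (vertexRep v * mk [p] * (vertexRep s)⁻¹) *
          (vertexRep s * mk w * (vertexRep t)⁻¹) := by
      rw [← List.singleton_append, ← mul_mk]
      group
    rw [hsplit]
    exact mul_mem (step_mem_closure hs) (ih hw)

lemma closure_eq_accepted : Subgroup.closure {of true ^ 2, of false} = accepted := by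
  refine le_antisymm ((Subgroup.closure_le _).mpr ?_) fun x hx => ?_
  · rintro x (rfl | rfl) <;> rfl
  · simpa [vertexRep, mk_toWord] using run_mem_closure (mem_accepted.mp hx)

lemma mem_accepted_of_conj_mem {g y : FreeGroup Bool} (hg : g ≠ 1)
    (hga : ∀ p ∈ g.toWord, p.1 = true) (hy : ∀ p ∈ y.toWord.head?, p.1 ≠ true)
    (h : y⁻¹ * g * y ∈ accepted) : y ∈ accepted := by
  rcases hw : y.toWord with _ | ⟨⟨_ | _, σ⟩, w⟩
  · rw [toWord_eq_nil_iff.mp hw]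
    exact one_mem _
  · have hgw : g.toWord ≠ [] := mt toWord_eq_nil_iff.mp hg
    have hleft : (y⁻¹ * g).toWord = y⁻¹.toWord ++ g.toWord := by
      refine toWord_mul_of_fst_ne fun p hp q hq => ?_
      simp only [toWord_inv, hw, invRev, List.map_cons, List.reverse_cons, List.getLast?_concat,
        Option.mem_def, Option.some.injEq] at hp
      rw [← hp, hga q (List.mem_of_mem_head? hq)]
      simp
    have hword : (y⁻¹ * g * y).toWord = y⁻¹.toWord ++ g.toWord ++ y.toWord := by
      rw [toWord_mul_of_fst_ne, hleft]
      rw [hleft, List.getLast?_append_of_ne_nil _ hgw]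
      intro p hp q hq
      rw [hw, List.head?_cons, Option.mem_def, Option.some.injEq] at hq
      rw [← hq, hga p (List.mem_of_mem_getLast? hp)]
      simp
    rw [mem_accepted, hword, run_append] at h
    obtain ⟨_ | _, -, h⟩ := Option.bind_eq_some_iff.mp h
    · exact h
    · simp [hw, run_cons, step] at h
  · simp [hw] at hy

end ASqB

theorem conj_power_of_a_into_H
    (a b : FreeGroup Bool) (ha : a = FreeGroup.of true) (hb : b = FreeGroup.of false)
    (H : Subgroup (FreeGroup Bool)) (hH : H = Subgroup.closure {a ^ 2, b})
    (l : ℤ) (h : FreeGroup Bool) (hh : h ∈ H)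
    (hconj : ∃ x : FreeGroup Bool, a ^ l = x * h * x⁻¹) :
    ∃ y ∈ H, a ^ l = y * h * y⁻¹ := by
  subst ha hb hH
  rw [ASqB.closure_eq_accepted] at hh ⊢
  obtain ⟨x, hx⟩ := hconj
  by_cases hl : of true ^ l = 1
  · refine ⟨1, one_mem _, ?_⟩
    rw [hl, eq_comm, conj_eq_one_iff] at hx
    rw [hl, hx]
    group
  obtain ⟨m, y, rfl, hy⟩ := exists_eq_zpow_mul_of_head_fst_ne true x
  have hhy : h = y⁻¹ * of true ^ l * y := calc
    h = (of true ^ m * y)⁻¹ * of true ^ l * (of true ^ m * y) := by rw [hx]; group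
    _ = y⁻¹ * of true ^ l * y := by group
  refine ⟨y, ASqB.mem_accepted_of_conj_mem hl (fun _ => fst_eq_of_mem_toWord_zpow) hy
    (hhy ▸ hh), ?_⟩
  rw [hhy]
  group
end

section
/- Let G be a torsion-free group in which the centralizer of every nontrivial element is an infinite cyclic malnormal subgroup. If x, y, z ∈ G satisfy yˡ = z xᵏ z⁻¹ for some nonzero integers k, l, then y ∈ z C_G(x) z⁻¹. -/
/-- A subgroup `H` of `G` is malnormal if `gHg⁻¹ ∩ H = {1}` for all `g ∉ H`. -/
def Malnormal {G : Type*} [Group G] (H : Subgroup G) : Prop :=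
  ∀ g : G, g ∉ H → ∀ x ∈ H, g * x * g⁻¹ ∈ H → x = 1

/-- A predicate on a monoid saying that there is no non-trivial torsion element. -/
def Monoid.IsTorsionFree (G : Type*) [Monoid G] : Prop :=
  ∀ g : G, g ≠ 1 → ¬IsOfFinOrder g

/-!
Conjugating by `z` reduces the claim to: if `wˡ = xᵏ` then `w` commutes with `x`. When `xᵏ ≠ 1`,
both `x` and `w` lie in the centralizer of `xᵏ`, which is cyclic, hence abelian; when `xᵏ = 1`,
torsion-freeness forces `x = 1`.
-/

theorem Monoid.IsTorsionFree.eq_one_of_zpow_eq_one {G : Type*} [Group G]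
    (htf : Monoid.IsTorsionFree G) {x : G} {k : ℤ} (hk : k ≠ 0) (h : x ^ k = 1) : x = 1 :=
  by_contra fun hx ↦ htf x hx (isOfFinOrder_iff_zpow_eq_one.mpr ⟨k, hk, h⟩)

theorem Commute.of_commute_of_centralizer_eq_zpowers {G : Type*} [Group G] {a b c d : G}
    (hd : Subgroup.centralizer {c} = Subgroup.zpowers d) (ha : Commute a c) (hb : Commute b c) :
    Commute a b := by
  have ha' : a ∈ Subgroup.zpowers d := hd ▸ Subgroup.mem_centralizer_singleton_iff.mpr ha.eq
  have hb' : b ∈ Subgroup.zpowers d := hd ▸ Subgroup.mem_centralizer_singleton_iff.mpr hb.eq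
  obtain ⟨m, rfl⟩ := Subgroup.mem_zpowers_iff.mp ha'
  obtain ⟨n, rfl⟩ := Subgroup.mem_zpowers_iff.mp hb'
  exact Commute.zpow_zpow_self d m n

theorem Commute.of_zpow_eq_zpow {G : Type*} [Group G] (htf : Monoid.IsTorsionFree G)
    (hcyc : ∀ c : G, c ≠ 1 → ∃ d : G, Subgroup.centralizer {c} = Subgroup.zpowers d)
    {a b : G} {k l : ℤ} (hk : k ≠ 0) (h : b ^ l = a ^ k) : Commute a b := by
  by_cases hak : a ^ k = 1
  · rw [htf.eq_one_of_zpow_eq_one hk hak]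
    exact Commute.one_left b
  obtain ⟨d, hd⟩ := hcyc (a ^ k) hak
  exact .of_commute_of_centralizer_eq_zpowers hd (Commute.self_zpow a k) (h ▸ Commute.self_zpow b l)

theorem conj_into_centralizer_of_commensurable_general {G : Type*} [Group G]
    (htf : Monoid.IsTorsionFree G)
    (hcent : ∀ c : G, c ≠ 1 →
      (∃ d : G, Subgroup.centralizer {c} = Subgroup.zpowers d) ∧
      (Subgroup.centralizer {c} : Set G).Infinite ∧
      Malnormal (Subgroup.centralizer {c}))
    (x y z : G) (k l : ℤ) (hk : k ≠ 0)
    (h : y ^ l = z * x ^ k * z⁻¹) :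
    ∃ c ∈ Subgroup.centralizer {x}, y = z * c * z⁻¹ := by
  have hconj : (z⁻¹ * y * z) ^ l = x ^ k := by
    simpa only [inv_inv, h, mul_assoc, inv_mul_cancel_left, inv_mul_cancel, mul_one]
      using conj_zpow (i := l) (a := z⁻¹) (b := y)
  have hcomm : Commute x (z⁻¹ * y * z) :=
    .of_zpow_eq_zpow htf (fun c hc ↦ (hcent c hc).1) hk hconj
  exact ⟨z⁻¹ * y * z, Subgroup.mem_centralizer_singleton_iff.mpr hcomm.eq.symm, by group⟩

theorem conj_into_centralizer_of_commensurable {G : Type*} [Group G]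
    (htf : Monoid.IsTorsionFree G)
    (hcent : ∀ c : G, c ≠ 1 →
      (∃ d : G, Subgroup.centralizer {c} = Subgroup.zpowers d) ∧
      (Subgroup.centralizer {c} : Set G).Infinite ∧
      Malnormal (Subgroup.centralizer {c}))
    (x y z : G) (k l : ℤ) (hk : k ≠ 0) (hl : l ≠ 0)
    (h : y ^ l = z * x ^ k * z⁻¹) :
    ∃ c ∈ Subgroup.centralizer {x}, y = z * c * z⁻¹ :=
  conj_into_centralizer_of_commensurable_general htf hcent x y z k l hk h
end

section
/- Let A be a group and ⟨x⟩ an infinite cyclic group. In the free product A * ⟨x⟩, the subgroup ⟨x⟩ is malnormal, every malnormal subgroup of A remains malnormal, and no nontrivial element of A is conjugate in A * ⟨x⟩ to an element of ⟨x⟩. -/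
open Monoid

theorem Malnormal.comap_mulEquiv {G G' : Type*} [Group G] [Group G'] {K : Subgroup G'}
    (hK : Malnormal K) (e : G ≃* G') : Malnormal (K.comap e.toMonoidHom) := by
  intro g hg y hy hconj
  refine e.injective ((hK (e g) hg (e y) hy ?_).trans (map_one e).symm)
  simpa using hconj

theorem Malnormal.map {G G' : Type*} [Group G] [Group G'] {B : Subgroup G} (hB : Malnormal B)
    {f : G →* G'} (hf : Function.Injective f) (hrange : Malnormal f.range) :
    Malnormal (B.map f) := by
  rintro g hg _ ⟨b, hb, rfl⟩ ⟨b', hb', hconj⟩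
  by_cases hgf : g ∈ f.range
  · obtain ⟨c, rfl⟩ := hgf
    have hc : c ∉ B := fun hc => hg ⟨c, hc, rfl⟩
    have hcb : c * b * c⁻¹ = b' := hf (by simpa using hconj.symm)
    rw [hB c hc b hb (hcb ▸ hb'), map_one]
  · exact hrange g hgf (f b) ⟨b, rfl⟩ ⟨b', hconj⟩

namespace Monoid.CoprodI

variable {ι : Type*}

theorem exists_eq_of_mul_prod_fstIdx_ne {M : ι → Type*} [∀ i, Monoid (M i)] (x : CoprodI M)
    (i : ι) : ∃ (a : M i) (w : Word M), w.fstIdx ≠ some i ∧ x = of a * w.prod := by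
  classical
  set p := Word.equivPair i (Word.equiv x)
  refine ⟨p.head, p.tail, p.fstIdx_ne, ?_⟩
  rw [← Word.prod_rcons, ← Word.equivPair_symm, Equiv.symm_apply_apply]
  exact (Word.equiv.symm_apply_apply x).symm

theorem NeWord.equiv_prod {M : ι → Type*} [∀ i, Monoid (M i)] [DecidableEq ι]
    [∀ i, DecidableEq (M i)] {i j : ι} (w : NeWord M i j) : Word.equiv w.prod = w.toWord :=
  Word.equiv.apply_symm_apply w.toWord

theorem NeWord.toList_eq_of_prod_eq_of {M : ι → Type*} [∀ i, Monoid (M i)] {i j k : ι}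
    {w : NeWord M i j} {m : M k} (h : w.prod = of m) : w.toList = [⟨k, m⟩] := by
  classical
  have hw := w.equiv_prod
  by_cases hm : m = 1
  · subst hm
    rw [h, map_one] at hw
    exact absurd (congrArg Word.toList hw).symm w.toList_ne_nil
  · rw [h, ← NeWord.prod_singleton m hm, NeWord.equiv_prod] at hw
    exact (congrArg Word.toList hw).symm

variable {G : ι → Type*} [∀ i, Group (G i)]

theorem NeWord.inv_prod_mul_of_mul_prod_ne_of {i j k l : ι} (v : NeWord G k l) (hk : k ≠ i)
    {n : G i} (hn : n ≠ 1) (m : G j) : v.prod⁻¹ * of n * v.prod ≠ of m := by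
  intro h
  have hW := NeWord.toList_eq_of_prod_eq_of
    (w := (v.inv.append hk (.singleton n hn)).append hk.symm v)
    (by simpa [NeWord.append_prod, NeWord.inv_prod] using h)
  have hlen := congrArg List.length hW
  have hv := List.length_pos_iff.mpr v.toList_ne_nil
  simp only [NeWord.toList, List.length_append, List.length_cons, List.length_nil] at hlen
  omega

theorem conj_of_eq_of {g : CoprodI G} {i j : ι} {m : G i} (hm : m ≠ 1) {m' : G j}
    (h : g * of m * g⁻¹ = of m') : i = j ∧ ∃ a : G i, g = of a := by
  obtain ⟨a, w, hw, hg⟩ := exists_eq_of_mul_prod_fstIdx_ne g⁻¹ i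
  have hconj : w.prod⁻¹ * of (a⁻¹ * m * a) * w.prod = of m' := by
    rw [← h, inv_eq_iff_eq_inv.mp hg]
    simp only [map_mul, map_inv, mul_inv_rev, inv_inv, mul_assoc]
  have hn : a⁻¹ * m * a ≠ 1 := by simpa [mul_assoc, inv_mul_eq_one] using hm
  rcases eq_or_ne w Word.empty with rfl | hne
  · have hij := NeWord.toList_eq_of_prod_eq_of (w := .singleton _ hn) (by simpa using hconj)
    simp only [NeWord.toList, List.cons.injEq, Sigma.mk.injEq, and_true] at hij
    rw [Word.prod_empty, mul_one] at hg
    exact ⟨hij.1, a⁻¹, by rw [map_inv, ← hg, inv_inv]⟩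
  · classical
    obtain ⟨k, l, v, rfl⟩ := NeWord.of_word w hne
    have hk : k ≠ i := fun hki => hw (by simp [Word.fstIdx, NeWord.toWord, hki])
    exact absurd hconj (v.inv_prod_mul_of_mul_prod_ne_of hk hn m')

theorem malnormal_range_of (i : ι) : Malnormal (of : G i →* CoprodI G).range := by
  rintro g hg _ ⟨m, rfl⟩ ⟨m', hconj⟩
  by_contra hm
  obtain ⟨-, a, rfl⟩ := conj_of_eq_of (fun h => hm (by rw [h, map_one])) hconj.symm
  exact hg ⟨a, rfl⟩

theorem conj_of_notMem_range_of {i j : ι} (hij : i ≠ j) {m : G i} (hm : m ≠ 1) (g : CoprodI G) :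
    g * of m * g⁻¹ ∉ (of : G j →* CoprodI G).range := by
  rintro ⟨m', hconj⟩
  exact hij (conj_of_eq_of hm hconj.symm).1

end Monoid.CoprodI

universe u v

namespace Monoid.Coprod

def pairFamily (G : Type u) (H : Type v) : Bool → Type (max u v)
  | true => ULift.{v} G
  | false => ULift.{u} H

variable {G : Type u} {H : Type v} [Group G] [Group H]

instance : ∀ b, Group (pairFamily G H b)
  | true => inferInstanceAs (Group (ULift G))
  | false => inferInstanceAs (Group (ULift H))

def mulEquivCoprodI : G ∗ H ≃* CoprodI (pairFamily G H) :=
  MonoidHom.toMulEquiv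
    (lift ((CoprodI.of (M := pairFamily G H) (i := true)).comp MulEquiv.ulift.symm.toMonoidHom)
      ((CoprodI.of (M := pairFamily G H) (i := false)).comp MulEquiv.ulift.symm.toMonoidHom))
    (CoprodI.lift fun
      | true => inl.comp MulEquiv.ulift.toMonoidHom
      | false => inr.comp MulEquiv.ulift.toMonoidHom)
    (hom_ext (MonoidHom.ext fun _ => rfl) (MonoidHom.ext fun _ => rfl))
    (CoprodI.ext_hom _ _ fun
      | true => MonoidHom.ext fun _ => CoprodI.lift_of _ _
      | false => MonoidHom.ext fun _ => CoprodI.lift_of _ _)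

@[simp]
theorem mulEquivCoprodI_inl (a : G) :
    mulEquivCoprodI (inl a : G ∗ H) = CoprodI.of (i := true) (ULift.up a) :=
  rfl

@[simp]
theorem mulEquivCoprodI_inr (b : H) :
    mulEquivCoprodI (inr b : G ∗ H) = CoprodI.of (i := false) (ULift.up b) :=
  rfl

theorem range_inl_eq_comap :
    (inl : G →* G ∗ H).range =
      (CoprodI.of (M := pairFamily G H) (i := true)).range.comap mulEquivCoprodI.toMonoidHom := by
  ext y
  refine ⟨by rintro ⟨a, rfl⟩; exact ⟨ULift.up a, by simp⟩, fun ⟨b, hb⟩ => ⟨b.down, ?_⟩⟩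
  exact mulEquivCoprodI.injective (by rw [mulEquivCoprodI_inl]; exact hb)

theorem range_inr_eq_comap :
    (inr : H →* G ∗ H).range =
      (CoprodI.of (M := pairFamily G H) (i := false)).range.comap mulEquivCoprodI.toMonoidHom := by
  ext y
  refine ⟨by rintro ⟨a, rfl⟩; exact ⟨ULift.up a, by simp⟩, fun ⟨b, hb⟩ => ⟨b.down, ?_⟩⟩
  exact mulEquivCoprodI.injective (by rw [mulEquivCoprodI_inr]; exact hb)

theorem malnormal_range_inl : Malnormal (inl : G →* G ∗ H).range := by
  rw [range_inl_eq_comap]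
  exact (CoprodI.malnormal_range_of true).comap_mulEquiv mulEquivCoprodI

theorem malnormal_range_inr : Malnormal (inr : H →* G ∗ H).range := by
  rw [range_inr_eq_comap]
  exact (CoprodI.malnormal_range_of false).comap_mulEquiv mulEquivCoprodI

theorem conj_inl_notMem_range_inr {a : G} (ha : a ≠ 1) (g : G ∗ H) :
    g * inl a * g⁻¹ ∉ (inr : H →* G ∗ H).range := by
  rw [range_inr_eq_comap, Subgroup.mem_comap]
  have ha' : (ULift.up a : pairFamily G H true) ≠ 1 := fun h => ha (congrArg ULift.down h)
  simpa using CoprodI.conj_of_notMem_range_of (by decide) ha' (mulEquivCoprodI g)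

end Monoid.Coprod

theorem free_product_with_infinite_cyclic (A : Type*) [Group A]
    (x : Coprod A (Multiplicative ℤ))
    (hx : x = Coprod.inr (Multiplicative.ofAdd (1 : ℤ))) :
    Malnormal (Subgroup.zpowers x) ∧
    (∀ B : Subgroup A, Malnormal B → Malnormal (B.map (Coprod.inl : A →* Coprod A (Multiplicative ℤ)))) ∧
    (∀ a : A, a ≠ 1 → ∀ g : Coprod A (Multiplicative ℤ),
      g * Coprod.inl a * g⁻¹ ∉ Subgroup.zpowers x) := by
  have hgen : Subgroup.zpowers (Multiplicative.ofAdd (1 : ℤ)) = ⊤ := by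
    refine eq_top_iff.mpr fun z _ => ⟨Multiplicative.toAdd z, ?_⟩
    beta_reduce
    rw [← ofAdd_zsmul, smul_eq_mul, mul_one, ofAdd_toAdd]
  have hx' : Subgroup.zpowers x = (Coprod.inr : Multiplicative ℤ →* _).range := by
    rw [hx, ← MonoidHom.map_zpowers, hgen, MonoidHom.range_eq_map]
  rw [hx']
  exact ⟨Coprod.malnormal_range_inr,
    fun B hB => hB.map Coprod.inl_injective Coprod.malnormal_range_inl,
    fun a ha g => Coprod.conj_inl_notMem_range_inr ha g⟩
end

section
/- Let G be a group and (H_j)_{j ∈ ℕ} a family of subgroups such that: (a) every finite subset of G is pointwise conjugate into some H_j, and (b) for each j there exists an element r_j ∈ G \ {1} with ⟨r_j⟩ ∩ g H_j g⁻¹ = {1} for all g ∈ G (in particular H_j ≠ G and G is not pointwise conjugate into H_j), and (c) every proper subgroup of G is contained in a conjugate of some H_j. Then G is invariably generated but not finitely invariably generated. -/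
/-- `G` is finitely invariably generated. -/
def FIG (G : Type*) [Group G] : Prop := ∃ S : Finset G, InvGen G (S : Set G)

theorem ig_not_fig_criterion {G : Type*} [Group G] [Nontrivial G]
    (H : ℕ → Subgroup G)
    (ha : ∀ S : Finset G, ∃ j : ℕ, ∀ x ∈ S, ∃ h ∈ H j, IsConj x h)
    (hb : ∀ j : ℕ, ∃ r : G, r ≠ 1 ∧ ∀ g : G,
      Subgroup.zpowers r ⊓ (H j).map (MulAut.conj g).toMonoidHom = ⊥)
    (hc : ∀ M : Subgroup G, M ≠ ⊤ →
      ∃ j : ℕ, ∃ v : G, M ≤ (H j).map (MulAut.conj v).toMonoidHom) :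
    IG G ∧ ¬ FIG G := by
  constructor
  · refine ⟨Set.univ, fun f => ?_⟩
    by_contra hM
    obtain ⟨j, v, hMv⟩ := hc _ hM
    obtain ⟨r, hr1, hr2⟩ := hb j
    have hmem : f r * r * (f r)⁻¹ ∈ Subgroup.closure ((fun s => f s * s * (f s)⁻¹) '' Set.univ) :=
      Subgroup.subset_closure ⟨r, trivial, rfl⟩
    have hmem2 := hMv hmem
    rw [Subgroup.mem_map] at hmem2
    obtain ⟨h, hh, hvh⟩ := hmem2
    have : r ∈ (H j).map (MulAut.conj ((f r)⁻¹ * v)).toMonoidHom := by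
      rw [Subgroup.mem_map]
      refine ⟨h, hh, ?_⟩
      simp only [MulEquiv.coe_toMonoidHom, MulAut.conj_apply] at hvh ⊢
      rw [mul_inv_rev, inv_inv,
        show (f r)⁻¹ * v * h * (v⁻¹ * f r) = (f r)⁻¹ * (v * h * v⁻¹) * f r by group, hvh]
      group
    have : r ∈ Subgroup.zpowers r ⊓ (H j).map (MulAut.conj ((f r)⁻¹ * v)).toMonoidHom :=
      ⟨Subgroup.mem_zpowers r, this⟩
    rw [hr2] at this
    exact hr1 (Subgroup.mem_bot.mp this)
  · rintro ⟨S, hS⟩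
    obtain ⟨j, hj⟩ := ha S
    obtain ⟨r, hr1, hr2⟩ := hb j
    classical
    have hj' : ∀ x, x ∈ S → ∃ h, h ∈ H j ∧ ∃ g : G, g * x * g⁻¹ = h := by
      intro x hx
      obtain ⟨h, hh, hcj⟩ := hj x hx
      obtain ⟨g, hg⟩ := isConj_iff.mp hcj
      exact ⟨h, hh, g, hg⟩
    choose h hh g hg using hj'
    let f : G → G := fun x => if hx : x ∈ S then g x hx else 1
    have himg : ((fun s => f s * s * (f s)⁻¹) '' (S : Set G)) ⊆ (H j : Set G) := by
      rintro _ ⟨x, hx, rfl⟩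
      have hx' : x ∈ S := hx
      simp only [f, dif_pos hx']
      rw [hg x hx']
      exact hh x hx' 
    have htop : (H j : Subgroup G) = ⊤ :=
      top_le_iff.mp ((hS f) ▸ Subgroup.closure_le (H j) |>.mpr himg)
    have h2 := hr2 1
    have : (H j).map (MulAut.conj (1 : G)).toMonoidHom = ⊤ := by
      rw [htop]
      exact Subgroup.map_top_of_surjective _ (MulEquiv.surjective _)
    rw [this, inf_top_eq] at h2
    exact hr1 (Subgroup.mem_bot.mp (h2 ▸ Subgroup.mem_zpowers r))
end

section
/- Let G be a torsion-free group, M ≤ G a subgroup, and H ≤ G a malnormal subgroup. If M contains a finite-index subgroup contained in H and M is nontrivial, then M ⊆ H. -/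
/-!
Malnormality makes `H` closed under roots in a torsion-free group: if `g ∉ H` but `g ^ n ∈ H`,
then `g` conjugates `g ^ n` to itself, so malnormality forces `g ^ n = 1`, and torsion-freeness
forces `g = 1 ∈ H`. Every element of `M` has a positive power in the finite-index subgroup
`M₀ ≤ H`, hence lies in `H`.
-/

theorem Malnormal.pow_eq_one_of_pow_mem {G : Type*} [Group G] {H : Subgroup G}
    (hmal : Malnormal H) {g : G} (hg : g ∉ H) {n : ℕ} (hgn : g ^ n ∈ H) : g ^ n = 1 :=
  hmal g hg _ hgn (by rwa [(Commute.self_pow g n).eq, mul_inv_cancel_right])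

theorem Malnormal.mem_of_pow_mem {G : Type*} [Group G] (htf : Monoid.IsTorsionFree G)
    {H : Subgroup G} (hmal : Malnormal H) {g : G} {n : ℕ} (hn : n ≠ 0) (hgn : g ^ n ∈ H) :
    g ∈ H := by
  by_contra hg
  have hg1 : g ≠ 1 := fun h => hg (h ▸ H.one_mem)
  exact htf g hg1 (isOfFinOrder_iff_pow_eq_one.mpr
    ⟨n, Nat.pos_of_ne_zero hn, hmal.pow_eq_one_of_pow_mem hg hgn⟩)

theorem le_malnormal_of_finiteIndex_sub_general {G : Type*} [Group G]
    (htf : Monoid.IsTorsionFree G) (M H : Subgroup G) (hmal : Malnormal H)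
    (M₀ : Subgroup G) (hM₀H : M₀ ≤ H)
    (hfin : (M₀.subgroupOf M).index ≠ 0) :
    M ≤ H := by
  intro g hg
  obtain ⟨n, hn, -, hgn⟩ := Subgroup.exists_pow_mem_of_relIndex_ne_zero hfin hg
  exact hmal.mem_of_pow_mem htf hn.ne' (hM₀H hgn.1)

theorem le_malnormal_of_finiteIndex_sub {G : Type*} [Group G]
    (htf : Monoid.IsTorsionFree G) (M H : Subgroup G) (hmal : Malnormal H)
    (M₀ : Subgroup G) (hM₀M : M₀ ≤ M) (hM₀H : M₀ ≤ H)
    (hfin : (M₀.subgroupOf M).index ≠ 0) (hM : M ≠ ⊥) :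
    M ≤ H :=
  le_malnormal_of_finiteIndex_sub_general htf M H hmal M₀ hM₀H hfin
end
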